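/- arXiv:2207.09233 — 7 statements merged into one kernel-verified Lean document; each statement's English description precedes it below -/
import Mathlib

section
/- Let A_K ∈ ℝ^{n×n}, F ∈ ℝ^{n×p}, C ∈ ℝ^{p×n}, D ∈ ℝ^{p×p}, let L ∈ ℝ^{p×p} be symmetric, let P, Γ ∈ ℝ^{n×n} be symmetric, and let ε > 0. Assume: (i) (passivity) for all x ∈ ℝⁿ and v ∈ ℝᵖ, (A_K x + F v)ᵀ P (A_K x + F v) − xᵀ P x ≤ vᵀ(C x + D v) − xᵀ Γ x; and (ii) the matrix Γ + Cᵀ L C − Cᵀ Lᵀ D L C − ε·I is positive semidefinite. Then for every x ∈ ℝⁿ, the closed-loop successor x⁺ = (A_K − F L C) x satisfies (x⁺)ᵀ P x⁺ − xᵀ P x ≤ −ε‖x‖². -/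
/-!
Feed the interconnection `v = -L C x` into the passivity inequality: the supply rate becomes
`-(L C x)ᵀ C x + (L C x)ᵀ D (L C x)`, and the coupling condition says exactly that this supply
rate minus the dissipation `xᵀ Γ x` is at most `-ε ‖x‖²`.
-/

open Matrix

section QuadraticForms

variable {R m n : Type*} [CommSemiring R] [Fintype m] [Fintype n]

theorem dotProduct_transpose_mul_mul_mulVec (B : Matrix m n R) (M : Matrix m m R) (x : n → R) :
    x ⬝ᵥ ((Bᵀ * M * B) *ᵥ x) = (B *ᵥ x) ⬝ᵥ (M *ᵥ (B *ᵥ x)) := by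
  rw [← mulVec_mulVec, ← mulVec_mulVec, dotProduct_transpose_mulVec, dotProduct_comm]

end QuadraticForms

section StaticFeedback

variable {R n p : Type*} [Fintype n] [Fintype p]

theorem mulVec_add_mulVec_neg_mulVec [Ring R] (A : Matrix n n R) (F : Matrix n p R)
    (K : Matrix p n R) (x : n → R) : A *ᵥ x + F *ᵥ (-K *ᵥ x) = (A - F * K) *ᵥ x := by
  rw [sub_mulVec, ← mulVec_mulVec, neg_mulVec, mulVec_neg, sub_eq_add_neg]

theorem lyapunov_diff_le_of_passive_of_feedback [CommRing R] [LE R] {A P Γ : Matrix n n R}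
    {F : Matrix n p R} {C : Matrix p n R} {D : Matrix p p R}
    (hpass : ∀ (x : n → R) (v : p → R),
      (A *ᵥ x + F *ᵥ v) ⬝ᵥ (P *ᵥ (A *ᵥ x + F *ᵥ v)) - x ⬝ᵥ (P *ᵥ x)
        ≤ v ⬝ᵥ (C *ᵥ x + D *ᵥ v) - x ⬝ᵥ (Γ *ᵥ x))
    (K : Matrix p n R) (x : n → R) :
    ((A - F * K) *ᵥ x) ⬝ᵥ (P *ᵥ ((A - F * K) *ᵥ x)) - x ⬝ᵥ (P *ᵥ x)
      ≤ -((C *ᵥ x) ⬝ᵥ (K *ᵥ x)) + (K *ᵥ x) ⬝ᵥ (D *ᵥ (K *ᵥ x)) - x ⬝ᵥ (Γ *ᵥ x) := by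
  have h := hpass x (-K *ᵥ x)
  rw [mulVec_add_mulVec_neg_mulVec] at h
  simpa only [neg_mulVec, mulVec_neg, neg_dotProduct, dotProduct_add, dotProduct_neg, neg_neg,
    dotProduct_comm (K *ᵥ x) (C *ᵥ x), neg_add] using h

end StaticFeedback

theorem dotProduct_coupling_mulVec {R n p : Type*} [CommRing R] [Fintype n] [Fintype p]
    [DecidableEq n] (Γ : Matrix n n R) (C : Matrix p n R) (D L : Matrix p p R) (ε : R)
    (x : n → R) :
    x ⬝ᵥ ((Γ + Cᵀ * L * C - Cᵀ * Lᵀ * D * (L * C) - ε • (1 : Matrix n n R)) *ᵥ x)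
      = x ⬝ᵥ (Γ *ᵥ x) + (C *ᵥ x) ⬝ᵥ (L *ᵥ (C *ᵥ x))
        - ((L * C) *ᵥ x) ⬝ᵥ (D *ᵥ ((L * C) *ᵥ x)) - ε * (x ⬝ᵥ x) := by
  rw [← transpose_mul, sub_mulVec, sub_mulVec, add_mulVec, dotProduct_sub, dotProduct_sub,
    dotProduct_add, dotProduct_transpose_mul_mul_mulVec, dotProduct_transpose_mul_mul_mulVec,
    smul_mulVec, one_mulVec, dotProduct_smul, smul_eq_mul]

theorem EuclideanSpace.real_norm_sq_eq_dotProduct {n : Type*} [Fintype n]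
    (x : EuclideanSpace ℝ n) : ‖x‖ ^ 2 = (x : n → ℝ) ⬝ᵥ x := by
  rw [EuclideanSpace.real_norm_sq_eq]
  simp only [dotProduct, sq]

theorem stmt_1_general {n p : ℕ}
    (A_K : Matrix (Fin n) (Fin n) ℝ) (F : Matrix (Fin n) (Fin p) ℝ)
    (C : Matrix (Fin p) (Fin n) ℝ) (D : Matrix (Fin p) (Fin p) ℝ)
    (L : Matrix (Fin p) (Fin p) ℝ)
    (P Γ : Matrix (Fin n) (Fin n) ℝ)
    (ε : ℝ)
    (hpass : ∀ (x : Fin n → ℝ) (v : Fin p → ℝ),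
      (A_K *ᵥ x + F *ᵥ v) ⬝ᵥ (P *ᵥ (A_K *ᵥ x + F *ᵥ v)) - x ⬝ᵥ (P *ᵥ x)
        ≤ v ⬝ᵥ (C *ᵥ x + D *ᵥ v) - x ⬝ᵥ (Γ *ᵥ x))
    (hcoupling : (Γ + Cᵀ * L * C - Cᵀ * Lᵀ * D * (L * C)
        - ε • (1 : Matrix (Fin n) (Fin n) ℝ)).PosSemidef) :
    ∀ x : EuclideanSpace ℝ (Fin n),
      ((A_K - F * (L * C)) *ᵥ x) ⬝ᵥ (P *ᵥ ((A_K - F * (L * C)) *ᵥ x))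
        - x ⬝ᵥ (P *ᵥ x) ≤ -ε * ‖x‖ ^ 2 := by
  intro x
  have hdecrease := lyapunov_diff_le_of_passive_of_feedback hpass (L * C) x
  have hcoupling_x := hcoupling.dotProduct_mulVec_nonneg x
  rw [star_trivial, dotProduct_coupling_mulVec, mulVec_mulVec] at hcoupling_x
  rw [EuclideanSpace.real_norm_sq_eq_dotProduct]
  linarith

/-- Passivity of `x⁺ = A_K x + F v` with virtual output `z = C x + D v`, together
with the coupling condition `Γ + CᵀLC − CᵀLᵀDLC − ε I ⪰ 0`, yields a quadratic
Lyapunov decrease for the interconnected closed loop `x⁺ = (A_K − F L C) x`. -/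
theorem stmt_1 {n p : ℕ}
    (A_K : Matrix (Fin n) (Fin n) ℝ) (F : Matrix (Fin n) (Fin p) ℝ)
    (C : Matrix (Fin p) (Fin n) ℝ) (D : Matrix (Fin p) (Fin p) ℝ)
    (L : Matrix (Fin p) (Fin p) ℝ) (hL : L.IsSymm)
    (P Γ : Matrix (Fin n) (Fin n) ℝ) (hP : P.IsSymm) (hΓ : Γ.IsSymm)
    (ε : ℝ) (hε : 0 < ε)
    (hpass : ∀ (x : Fin n → ℝ) (v : Fin p → ℝ),
      (A_K *ᵥ x + F *ᵥ v) ⬝ᵥ (P *ᵥ (A_K *ᵥ x + F *ᵥ v)) - x ⬝ᵥ (P *ᵥ x)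
        ≤ v ⬝ᵥ (C *ᵥ x + D *ᵥ v) - x ⬝ᵥ (Γ *ᵥ x))
    (hcoupling : (Γ + Cᵀ * L * C - Cᵀ * Lᵀ * D * (L * C)
        - ε • (1 : Matrix (Fin n) (Fin n) ℝ)).PosSemidef) :
    ∀ x : EuclideanSpace ℝ (Fin n),
      ((A_K - F * (L * C)) *ᵥ x) ⬝ᵥ (P *ᵥ ((A_K - F * (L * C)) *ᵥ x))
        - x ⬝ᵥ (P *ᵥ x) ≤ -ε * ‖x‖ ^ 2 :=
  stmt_1_general A_K F C D L P Γ ε hpass hcoupling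
end

section
/- Let A_K ∈ ℝ^{n×n}, F ∈ ℝ^{n×p}, C ∈ ℝ^{p×n}, D ∈ ℝ^{p×p}, let L ∈ ℝ^{p×p} be symmetric, let P ∈ ℝ^{n×n} be symmetric positive definite, let Γ ∈ ℝ^{n×n} be symmetric, and let ε > 0. Assume: (i) for all x ∈ ℝⁿ and v ∈ ℝᵖ, (A_K x + F v)ᵀ P (A_K x + F v) − xᵀ P x ≤ vᵀ(C x + D v) − xᵀ Γ x; and (ii) Γ + Cᵀ L C − Cᵀ Lᵀ D L C − ε·I is positive semidefinite. Then every trajectory of the closed-loop linear system x(t+1) = (A_K − F L C) x(t) converges to the origin as t → ∞. -/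
/-!
Under the feedback `v = -L C x` the closed loop is the passive subsystem, and condition (ii)
says exactly that the supply rate `vᵀ(C x + D v)` minus the dissipation `xᵀ Γ x` is at most
`-ε |x|²`. Hence the storage `xᵀ P x ≥ 0` drops by at least `ε |x(t)|²` at every step;
telescoping makes `∑ₜ |x(t)|²` finite, so `x(t) → 0`.
-/

open Matrix

open Filter Topology

theorem supply_rate_le_of_posSemidef {ι κ : Type*} [Fintype ι] [DecidableEq ι] [Fintype κ]
    (C : Matrix κ ι ℝ) (D L : Matrix κ κ ℝ) (Γ : Matrix ι ι ℝ) (ε : ℝ)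
    (hcoupling : (Γ + Cᵀ * L * C - Cᵀ * Lᵀ * D * (L * C) - ε • (1 : Matrix ι ι ℝ)).PosSemidef)
    (y : ι → ℝ) :
    -((L * C) *ᵥ y) ⬝ᵥ (C *ᵥ y + D *ᵥ -((L * C) *ᵥ y)) - y ⬝ᵥ (Γ *ᵥ y)
      ≤ -(ε * (y ⬝ᵥ y)) := by
  have hquad := hcoupling.dotProduct_mulVec_nonneg y
  simp only [star_trivial, sub_mulVec, add_mulVec, smul_mulVec, one_mulVec, ← mulVec_mulVec,
    dotProduct_sub, dotProduct_add, dotProduct_smul, smul_eq_mul,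
    dotProduct_transpose_mulVec] at hquad
  rw [dotProduct_comm (Lᵀ *ᵥ _), dotProduct_transpose_mulVec] at hquad
  simp only [← mulVec_mulVec, mulVec_neg, neg_dotProduct, dotProduct_add, dotProduct_neg]
  linarith [dotProduct_comm (D *ᵥ L *ᵥ C *ᵥ y) (L *ᵥ C *ᵥ y)]

theorem storage_closedLoop_le {ι κ : Type*} [Fintype ι] [DecidableEq ι] [Fintype κ]
    (A_K : Matrix ι ι ℝ) (F : Matrix ι κ ℝ) (C : Matrix κ ι ℝ) (D L : Matrix κ κ ℝ)
    (P Γ : Matrix ι ι ℝ) (ε : ℝ)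
    (hpass : ∀ (x : ι → ℝ) (v : κ → ℝ),
      (A_K *ᵥ x + F *ᵥ v) ⬝ᵥ (P *ᵥ (A_K *ᵥ x + F *ᵥ v)) - x ⬝ᵥ (P *ᵥ x)
        ≤ v ⬝ᵥ (C *ᵥ x + D *ᵥ v) - x ⬝ᵥ (Γ *ᵥ x))
    (hcoupling : (Γ + Cᵀ * L * C - Cᵀ * Lᵀ * D * (L * C) - ε • (1 : Matrix ι ι ℝ)).PosSemidef)
    (y : ι → ℝ) :
    ((A_K - F * (L * C)) *ᵥ y) ⬝ᵥ (P *ᵥ ((A_K - F * (L * C)) *ᵥ y)) + ε * (y ⬝ᵥ y)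
      ≤ y ⬝ᵥ (P *ᵥ y) := by
  have hfeedback : (A_K - F * (L * C)) *ᵥ y = A_K *ᵥ y + F *ᵥ -((L * C) *ᵥ y) := by
    rw [sub_mulVec, ← mulVec_mulVec, mulVec_neg, sub_eq_add_neg]
  rw [hfeedback]
  linarith [hpass y (-((L * C) *ᵥ y)), supply_rate_le_of_posSemidef C D L Γ ε hcoupling y]

theorem tendsto_zero_of_succ_add_le {V q : ℕ → ℝ} {ε : ℝ} (hε : 0 < ε) (hV : ∀ t, 0 ≤ V t)
    (hq : ∀ t, 0 ≤ q t) (hdec : ∀ t, V (t + 1) + ε * q t ≤ V t) :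
    Tendsto q atTop (𝓝 0) := by
  have htelescope : ∀ N, ∑ t ∈ Finset.range N, ε * q t ≤ V 0 - V N := by
    intro N
    induction N with
    | zero => simp
    | succ N ih => rw [Finset.sum_range_succ]; linarith [hdec N]
  have hsum : Summable fun t => ε * q t :=
    summable_of_sum_range_le (fun t => mul_nonneg hε.le (hq t))
      fun N => (htelescope N).trans (sub_le_self _ (hV N))
  exact ((summable_mul_left_iff hε.ne').1 hsum).tendsto_atTop_zero

theorem tendsto_zero_of_tendsto_dotProduct_self {α ι : Type*} [Fintype ι] {l : Filter α}
    {x : α → ι → ℝ} (h : Tendsto (fun t => x t ⬝ᵥ x t) l (𝓝 0)) : Tendsto x l (𝓝 0) := by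
  refine tendsto_pi_nhds.2 fun i => squeeze_zero_norm (fun t => ?_) (by simpa using h.sqrt)
  rw [Real.norm_eq_abs]
  refine Real.abs_le_sqrt ?_
  rw [sq]
  exact Finset.single_le_sum (f := fun j => x t j * x t j) (fun j _ => mul_self_nonneg _)
    (Finset.mem_univ i)

theorem stmt_2_general {n p : ℕ}
    (A_K : Matrix (Fin n) (Fin n) ℝ) (F : Matrix (Fin n) (Fin p) ℝ)
    (C : Matrix (Fin p) (Fin n) ℝ) (D : Matrix (Fin p) (Fin p) ℝ)
    (L : Matrix (Fin p) (Fin p) ℝ)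
    (P : Matrix (Fin n) (Fin n) ℝ) (hP : P.PosDef)
    (Γ : Matrix (Fin n) (Fin n) ℝ)
    (ε : ℝ) (hε : 0 < ε)
    (hpass : ∀ (x : Fin n → ℝ) (v : Fin p → ℝ),
      (A_K *ᵥ x + F *ᵥ v) ⬝ᵥ (P *ᵥ (A_K *ᵥ x + F *ᵥ v)) - x ⬝ᵥ (P *ᵥ x)
        ≤ v ⬝ᵥ (C *ᵥ x + D *ᵥ v) - x ⬝ᵥ (Γ *ᵥ x))
    (hcoupling : (Γ + Cᵀ * L * C - Cᵀ * Lᵀ * D * (L * C)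
        - ε • (1 : Matrix (Fin n) (Fin n) ℝ)).PosSemidef)
    (x : ℕ → Fin n → ℝ)
    (hx : ∀ t, x (t + 1) = (A_K - F * (L * C)) *ᵥ x t) :
    Filter.Tendsto x Filter.atTop (nhds 0) := by
  refine tendsto_zero_of_tendsto_dotProduct_self
    (tendsto_zero_of_succ_add_le (V := fun t => x t ⬝ᵥ (P *ᵥ x t)) hε
      (fun t => ?_) (fun t => ?_) (fun t => ?_))
  · simpa using hP.posSemidef.dotProduct_mulVec_nonneg (x t)
  · simpa using dotProduct_self_star_nonneg (x t)
  · simpa only [hx t] using storage_closedLoop_le A_K F C D L P Γ ε hpass hcoupling (x t)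

/-- Core of Theorem 1: passivity with quadratic storage `xᵀPx` (P ≻ 0) and
dissipation `xᵀΓx`, plus the coupling condition `Γ + CᵀLC − CᵀLᵀDLC − ε I ⪰ 0`,
implies that every trajectory of `x(t+1) = (A_K − F L C) x(t)` converges to 0. -/
theorem stmt_2 {n p : ℕ}
    (A_K : Matrix (Fin n) (Fin n) ℝ) (F : Matrix (Fin n) (Fin p) ℝ)
    (C : Matrix (Fin p) (Fin n) ℝ) (D : Matrix (Fin p) (Fin p) ℝ)
    (L : Matrix (Fin p) (Fin p) ℝ) (hL : L.IsSymm)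
    (P : Matrix (Fin n) (Fin n) ℝ) (hP : P.PosDef)
    (Γ : Matrix (Fin n) (Fin n) ℝ) (hΓ : Γ.IsSymm)
    (ε : ℝ) (hε : 0 < ε)
    (hpass : ∀ (x : Fin n → ℝ) (v : Fin p → ℝ),
      (A_K *ᵥ x + F *ᵥ v) ⬝ᵥ (P *ᵥ (A_K *ᵥ x + F *ᵥ v)) - x ⬝ᵥ (P *ᵥ x)
        ≤ v ⬝ᵥ (C *ᵥ x + D *ᵥ v) - x ⬝ᵥ (Γ *ᵥ x))
    (hcoupling : (Γ + Cᵀ * L * C - Cᵀ * Lᵀ * D * (L * C)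
        - ε • (1 : Matrix (Fin n) (Fin n) ℝ)).PosSemidef)
    (x : ℕ → Fin n → ℝ)
    (hx : ∀ t, x (t + 1) = (A_K - F * (L * C)) *ᵥ x t) :
    Filter.Tendsto x Filter.atTop (nhds 0) :=
  stmt_2_general A_K F C D L P hP Γ ε hε hpass hcoupling x hx
end

section
/- Let A ∈ ℝ^{n×n}, B ∈ ℝ^{n×m}, K ∈ ℝ^{m×n}, F ∈ ℝ^{n×p}, C ∈ ℝ^{p×n}. Let P ∈ ℝ^{n×n} be symmetric positive definite, Γ ∈ ℝ^{n×n} diagonal positive definite, and D ∈ ℝ^{p×p} diagonal positive definite. Set E = P⁻¹, Y = K P⁻¹, and X = Γ⁻¹. If the symmetric 4×4 block matrix [[E, ½ E Cᵀ, (A E + B Y)ᵀ, E], [½ C E, D, Fᵀ, 0], [A E + B Y, F, E, 0], [E, 0, 0, X]] is positive semidefinite, then for all x ∈ ℝⁿ and v ∈ ℝᵖ, ((A + B K) x + F v)ᵀ P ((A + B K) x + F v) − xᵀ P x ≤ vᵀ(C x + D v) − xᵀ Γ x. -/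
/-!
Evaluating the quadratic form of the LMI matrix at the test vector
`(P x, v, -P x⁺, -Γ x)` gives, because `E = P⁻¹` and `X = Γ⁻¹` cancel against the
entries `P x`, `P x⁺` and `Γ x`, exactly the slack
`xᵀPx + vᵀ(Cx + Dv) - x⁺ᵀPx⁺ - xᵀΓx` of the dissipation inequality. This one congruence
step replaces the two Schur complements of the paper.
-/

open Matrix

section
variable {α l m n o : Type*} [Fintype l] [Fintype m] [Fintype n] [Fintype o]

theorem sumElim_dotProduct_fromBlocks_mulVec_sumElim [NonUnitalNonAssocSemiring α]
    (A : Matrix n l α) (B : Matrix n m α) (C : Matrix o l α) (D : Matrix o m α)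
    (u₁ : n → α) (u₂ : o → α) (w₁ : l → α) (w₂ : m → α) :
    Sum.elim u₁ u₂ ⬝ᵥ (fromBlocks A B C D *ᵥ Sum.elim w₁ w₂)
      = u₁ ⬝ᵥ (A *ᵥ w₁) + u₁ ⬝ᵥ (B *ᵥ w₂) + (u₂ ⬝ᵥ (C *ᵥ w₁) + u₂ ⬝ᵥ (D *ᵥ w₂)) := by
  rw [fromBlocks_mulVec, sumElim_dotProduct_sumElim, dotProduct_add, dotProduct_add,
    Sum.elim_comp_inl, Sum.elim_comp_inr]

end

section
variable {α n : Type*} [CommRing α] [Fintype n] [DecidableEq n] {P : Matrix n n α}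

theorem Matrix.inv_mulVec_mulVec (hP : IsUnit P.det) (x : n → α) : P⁻¹ *ᵥ (P *ᵥ x) = x := by
  rw [mulVec_mulVec, nonsing_inv_mul P hP, one_mulVec]

theorem Matrix.IsSymm.mulVec_dotProduct_inv_mulVec (hsymm : P.IsSymm) (hP : IsUnit P.det)
    (x y : n → α) : (P *ᵥ x) ⬝ᵥ (P⁻¹ *ᵥ y) = x ⬝ᵥ y := by
  rw [dotProduct_comm, ← dotProduct_transpose_mulVec, hsymm.eq, mulVec_mulVec,
    mul_nonsing_inv P hP, one_mulVec]

end

section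
variable {n m p : Type*} [Fintype n] [Fintype m]

noncomputable def passivityLMI (A : Matrix n n ℝ) (B : Matrix n m ℝ) (F : Matrix n p ℝ)
    (C : Matrix p n ℝ) (D : Matrix p p ℝ) (E : Matrix n n ℝ) (Y : Matrix m n ℝ) (X : Matrix n n ℝ) :
    Matrix ((n ⊕ p) ⊕ (n ⊕ n)) ((n ⊕ p) ⊕ (n ⊕ n)) ℝ :=
  fromBlocks
    (fromBlocks E ((1 / 2 : ℝ) • (E * Cᵀ)) ((1 / 2 : ℝ) • (C * E)) D)
    (fromBlocks (A * E + B * Y)ᵀ E Fᵀ 0)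
    (fromBlocks (A * E + B * Y) F E 0)
    (fromBlocks E 0 0 X)

theorem dotProduct_passivityLMI_mulVec [Fintype p] [DecidableEq n]
    {A : Matrix n n ℝ} {B : Matrix n m ℝ} {K : Matrix m n ℝ}
    {F : Matrix n p ℝ} {C : Matrix p n ℝ} {D : Matrix p p ℝ} {P Γ : Matrix n n ℝ}
    (hPsymm : P.IsSymm) (hP : IsUnit P.det) (hΓsymm : Γ.IsSymm) (hΓ : IsUnit Γ.det)
    (x : n → ℝ) (v : p → ℝ) :
    let x' := (A + B * K) *ᵥ x + F *ᵥ v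
    let w := Sum.elim (Sum.elim (P *ᵥ x) v) (Sum.elim (-(P *ᵥ x')) (-(Γ *ᵥ x)))
    w ⬝ᵥ (passivityLMI A B F C D P⁻¹ (K * P⁻¹) Γ⁻¹ *ᵥ w)
      = x ⬝ᵥ (P *ᵥ x) + v ⬝ᵥ (C *ᵥ x + D *ᵥ v) - x' ⬝ᵥ (P *ᵥ x') - x ⬝ᵥ (Γ *ᵥ x) := by
  intro x' w
  have hAE : A * P⁻¹ + B * (K * P⁻¹) = (A + B * K) * P⁻¹ := by
    rw [add_mul, Matrix.mul_assoc]
  simp only [w, passivityLMI, sumElim_dotProduct_fromBlocks_mulVec_sumElim, hAE,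
    transpose_mul, hPsymm.inv.eq, ← mulVec_mulVec, smul_mulVec,
    dotProduct_smul, mulVec_neg, dotProduct_neg, neg_dotProduct, zero_mulVec, dotProduct_zero,
    inv_mulVec_mulVec hP, hPsymm.mulVec_dotProduct_inv_mulVec hP,
    hΓsymm.mulVec_dotProduct_inv_mulVec hΓ, dotProduct_transpose_mulVec, smul_eq_mul]
  have hx' : (P *ᵥ x') ⬝ᵥ ((A + B * K) *ᵥ x) + (P *ᵥ x') ⬝ᵥ (F *ᵥ v) = x' ⬝ᵥ (P *ᵥ x') := by
    rw [← dotProduct_add, dotProduct_comm]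
  rw [dotProduct_comm (P *ᵥ x), dotProduct_comm (Γ *ᵥ x), dotProduct_comm (P *ᵥ x') x',
    dotProduct_add]
  linarith

end

theorem stmt_3_general {n m p : ℕ}
    (A : Matrix (Fin n) (Fin n) ℝ) (B : Matrix (Fin n) (Fin m) ℝ)
    (K : Matrix (Fin m) (Fin n) ℝ) (F : Matrix (Fin n) (Fin p) ℝ)
    (C : Matrix (Fin p) (Fin n) ℝ)
    (P : Matrix (Fin n) (Fin n) ℝ) (hP : P.PosDef)
    (Γ : Matrix (Fin n) (Fin n) ℝ) (hΓ : Γ.PosDef)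
    (D : Matrix (Fin p) (Fin p) ℝ)
    (E : Matrix (Fin n) (Fin n) ℝ) (hE : E = P⁻¹)
    (Y : Matrix (Fin m) (Fin n) ℝ) (hY : Y = K * P⁻¹)
    (X : Matrix (Fin n) (Fin n) ℝ) (hX : X = Γ⁻¹)
    (hLMI : (Matrix.fromBlocks
        (Matrix.fromBlocks E (((1 : ℝ) / 2) • (E * Cᵀ))
          (((1 : ℝ) / 2) • (C * E)) D)
        (Matrix.fromBlocks (A * E + B * Y)ᵀ E Fᵀ 0)
        (Matrix.fromBlocks (A * E + B * Y) F E 0)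
        (Matrix.fromBlocks E 0 0 X)).PosSemidef) :
    ∀ (x : Fin n → ℝ) (v : Fin p → ℝ),
      ((A + B * K) *ᵥ x + F *ᵥ v) ⬝ᵥ (P *ᵥ ((A + B * K) *ᵥ x + F *ᵥ v))
        - x ⬝ᵥ (P *ᵥ x)
      ≤ v ⬝ᵥ (C *ᵥ x + D *ᵥ v) - x ⬝ᵥ (Γ *ᵥ x) := by
  intro x v
  subst hE hY hX
  set x' := (A + B * K) *ᵥ x + F *ᵥ v
  have hLMI : (passivityLMI A B F C D P⁻¹ (K * P⁻¹) Γ⁻¹).PosSemidef := hLMI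
  have hquad := hLMI.dotProduct_mulVec_nonneg
    (Sum.elim (Sum.elim (P *ᵥ x) v) (Sum.elim (-(P *ᵥ x')) (-(Γ *ᵥ x))))
  rw [star_trivial, dotProduct_passivityLMI_mulVec
    (isHermitian_iff_isSymm.mp hP.isHermitian) hP.det_pos.ne'.isUnit
    (isHermitian_iff_isSymm.mp hΓ.isHermitian) hΓ.det_pos.ne'.isUnit] at hquad
  linarith

/-- LMI (11a) of the redesign phase: positive semidefiniteness of the 4×4 block
matrix, with `E = P⁻¹`, `Y = K P⁻¹`, `X = Γ⁻¹`, certifies strict passivity of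
`x⁺ = (A + BK) x + F v` with respect to the virtual output `z = C x + D v`,
with storage `xᵀPx` and dissipation `xᵀΓx`. -/
theorem stmt_3 {n m p : ℕ}
    (A : Matrix (Fin n) (Fin n) ℝ) (B : Matrix (Fin n) (Fin m) ℝ)
    (K : Matrix (Fin m) (Fin n) ℝ) (F : Matrix (Fin n) (Fin p) ℝ)
    (C : Matrix (Fin p) (Fin n) ℝ)
    (P : Matrix (Fin n) (Fin n) ℝ) (hP : P.PosDef)
    (Γ : Matrix (Fin n) (Fin n) ℝ) (hΓdiag : Γ.IsDiag) (hΓ : Γ.PosDef)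
    (D : Matrix (Fin p) (Fin p) ℝ) (hDdiag : D.IsDiag) (hD : D.PosDef)
    (E : Matrix (Fin n) (Fin n) ℝ) (hE : E = P⁻¹)
    (Y : Matrix (Fin m) (Fin n) ℝ) (hY : Y = K * P⁻¹)
    (X : Matrix (Fin n) (Fin n) ℝ) (hX : X = Γ⁻¹)
    (hLMI : (Matrix.fromBlocks
        (Matrix.fromBlocks E (((1 : ℝ) / 2) • (E * Cᵀ))
          (((1 : ℝ) / 2) • (C * E)) D)
        (Matrix.fromBlocks (A * E + B * Y)ᵀ E Fᵀ 0)
        (Matrix.fromBlocks (A * E + B * Y) F E 0)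
        (Matrix.fromBlocks E 0 0 X)).PosSemidef) :
    ∀ (x : Fin n → ℝ) (v : Fin p → ℝ),
      ((A + B * K) *ᵥ x + F *ᵥ v) ⬝ᵥ (P *ᵥ ((A + B * K) *ᵥ x + F *ᵥ v))
        - x ⬝ᵥ (P *ᵥ x)
      ≤ v ⬝ᵥ (C *ᵥ x + D *ᵥ v) - x ⬝ᵥ (Γ *ᵥ x) :=
  stmt_3_general A B K F C P hP Γ hΓ D E hE Y hY X hX hLMI
end

section
/- Let P ∈ ℝ^{n×n} be symmetric positive definite, c ∈ ℝⁿ, α ≥ 0, K ∈ ℝ^{m×n}, d ∈ ℝ^m, H ∈ ℝ^{r×m} and h ∈ ℝ^r. If for every row index l ∈ {1, …, r} the inequality H_l K c + H_l d + α·√((H_l K) P⁻¹ (H_l K)ᵀ) ≤ h_l holds, where H_l denotes the l-th row of H and h_l the l-th entry of h, then every x in the ellipsoid E(P,c,α) = {x ∈ ℝⁿ : (x−c)ᵀP(x−c) ≤ α²} satisfies H(K x + d) ≤ h componentwise. -/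
/-!
The affine map `x ↦ H_l (K x + d)` equals its value `H_l (K c + d)` at the centre plus
`⟪(H_l K)ᵀ, x - c⟫`. By Cauchy–Schwarz for the inner product defined by `P⁻¹`, applied to
`(H_l K)ᵀ` and `P (x - c)`, this last term is at most `√((H_l K) P⁻¹ (H_l K)ᵀ) · √((x-c)ᵀP(x-c))`,
and the second factor is at most `α` on the ellipsoid.
-/

open Matrix

namespace Matrix

variable {ι : Type*} [Fintype ι]

theorem PosSemidef.dotProduct_mulVec_sq_le {M : Matrix ι ι ℝ} (hM : M.PosSemidef)
    (x y : ι → ℝ) : (x ⬝ᵥ M *ᵥ y) ^ 2 ≤ (x ⬝ᵥ M *ᵥ x) * (y ⬝ᵥ M *ᵥ y) := by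
  classical
  have hsymm : LinearMap.IsSymm M.toBilin' := LinearMap.BilinForm.isSymm_iff.mp <|
    isSymm_toBilin'_iff_isSymm.mpr (isHermitian_iff_isSymm.mp hM.isHermitian)
  have hnonneg (x : ι → ℝ) : 0 ≤ M.toBilin' x x := by
    simpa only [toBilin'_apply', star_trivial] using hM.dotProduct_mulVec_nonneg x
  simpa only [toBilin'_apply'] using M.toBilin'.apply_sq_le_of_symm hnonneg hsymm x y

variable [DecidableEq ι]

theorem PosDef.dotProduct_sq_le {P : Matrix ι ι ℝ} (hP : P.PosDef) (v z : ι → ℝ) :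
    (v ⬝ᵥ z) ^ 2 ≤ (v ⬝ᵥ P⁻¹ *ᵥ v) * (z ⬝ᵥ P *ᵥ z) := by
  have hcancel : P⁻¹ *ᵥ (P *ᵥ z) = z := by
    rw [mulVec_mulVec, nonsing_inv_mul _ ((isUnit_iff_isUnit_det P).mp hP.isUnit), one_mulVec]
  simpa only [hcancel, dotProduct_comm (P *ᵥ z)] using
    hP.inv.posSemidef.dotProduct_mulVec_sq_le v (P *ᵥ z)

theorem PosDef.dotProduct_le_of_dotProduct_mulVec_le_sq {P : Matrix ι ι ℝ} (hP : P.PosDef)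
    {α : ℝ} (hα : 0 ≤ α) (v : ι → ℝ) {z : ι → ℝ} (hz : z ⬝ᵥ P *ᵥ z ≤ α ^ 2) :
    v ⬝ᵥ z ≤ α * √(v ⬝ᵥ P⁻¹ *ᵥ v) := by
  have hv : 0 ≤ v ⬝ᵥ P⁻¹ *ᵥ v := hP.inv.posSemidef.dotProduct_mulVec_nonneg v
  calc v ⬝ᵥ z ≤ |v ⬝ᵥ z| := le_abs_self _
    _ ≤ √((v ⬝ᵥ P⁻¹ *ᵥ v) * (z ⬝ᵥ P *ᵥ z)) := Real.abs_le_sqrt (hP.dotProduct_sq_le v z)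
    _ = √(v ⬝ᵥ P⁻¹ *ᵥ v) * √(z ⬝ᵥ P *ᵥ z) := Real.sqrt_mul hv _
    _ ≤ √(v ⬝ᵥ P⁻¹ *ᵥ v) * α := by
      gcongr
      exact Real.sqrt_le_iff.mpr ⟨hα, hz⟩
    _ = α * √(v ⬝ᵥ P⁻¹ *ᵥ v) := mul_comm _ _

end Matrix

/-- Constraint (10): if `H_l K c + H_l d + α √((H_l K) P⁻¹ (H_l K)ᵀ) ≤ h_l` for
every row `l`, then the affine terminal controller `κ(x) = Kx + d` satisfies the
input constraints `H u ≤ h` on the ellipsoid `{x : (x−c)ᵀP(x−c) ≤ α²}`. -/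
theorem stmt_7 {n m r : ℕ} (P : Matrix (Fin n) (Fin n) ℝ) (hP : P.PosDef)
    (c : Fin n → ℝ) (α : ℝ) (hα : 0 ≤ α)
    (K : Matrix (Fin m) (Fin n) ℝ) (d : Fin m → ℝ)
    (H : Matrix (Fin r) (Fin m) ℝ) (h : Fin r → ℝ)
    (hrow : ∀ l : Fin r,
      (H l) ᵥ* K ⬝ᵥ c + H l ⬝ᵥ d
        + α * Real.sqrt ((H l) ᵥ* K ⬝ᵥ (P⁻¹ *ᵥ ((H l) ᵥ* K))) ≤ h l) :
    ∀ x : Fin n → ℝ, (x - c) ⬝ᵥ (P *ᵥ (x - c)) ≤ α ^ 2 →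
      ∀ l : Fin r, (H *ᵥ (K *ᵥ x + d)) l ≤ h l := by
  intro x hx l
  have hsplit : (H *ᵥ (K *ᵥ x + d)) l
      = (H l) ᵥ* K ⬝ᵥ c + H l ⬝ᵥ d + (H l) ᵥ* K ⬝ᵥ (x - c) := by
    change H l ⬝ᵥ (K *ᵥ x + d) = _
    rw [dotProduct_add, dotProduct_mulVec, dotProduct_sub]
    ring
  have hbound := hP.dotProduct_le_of_dotProduct_mulVec_le_sq hα ((H l) ᵥ* K) hx
  linarith [hrow l]
end

section
/- Let P ∈ ℝ^{n×n} be symmetric positive definite, α > 0, x, c ∈ ℝⁿ, and b̄ ∈ ℝⁿ with nonnegative entries. Write [M]_j for the j-th diagonal entry of a square matrix M and {M}_j for the sum of absolute values of the entries in its j-th row. If (i) 2α·[P⁻¹]_j ≥ b̄_j + α·{P⁻¹}_j for all j ∈ {1,…,n}, (ii) α ≥ Σ_{j=1}^{n} b̄_j, and (iii) −b̄_j ≤ x_j − c_j ≤ b̄_j for all j ∈ {1,…,n}, then (x−c)ᵀ P (x−c) ≤ α². -/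
/-!
By the Schur complement with respect to the positive definite block `α P⁻¹`, the inequality
`(x - c)ᵀ P (x - c) ≤ α²` follows from positive semidefiniteness of the block matrix
`[[α P⁻¹, x - c], [(x - c)ᵀ, α]]`. Hypotheses (i)–(iii) say exactly that this symmetric matrix is
diagonally dominant, and by Gershgorin's circle theorem a diagonally dominant Hermitian matrix
has nonnegative eigenvalues.
-/

open Matrix Finset
open scoped ComplexOrder

theorem Matrix.IsHermitian.posSemidef_of_sum_norm_le_two_mul_re_diag {𝕜 ι : Type*} [RCLike 𝕜]
    [Fintype ι] [DecidableEq ι] {A : Matrix ι ι 𝕜} (hA : A.IsHermitian)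
    (hdom : ∀ i, ∑ j, ‖A i j‖ ≤ 2 * RCLike.re (A i i)) : A.PosSemidef := by
  refine hA.posSemidef_iff_eigenvalues_nonneg.mpr fun i => show (0 : ℝ) ≤ _ from ?_
  have hμ : Module.End.HasEigenvalue (toLin' A) (hA.eigenvalues i : 𝕜) := by
    refine .of_mem_spectrum ?_
    rw [spectrum_toLin', ← RCLike.algebraMap_eq_ofReal, spectrum.algebraMap_mem_iff]
    exact hA.eigenvalues_mem_spectrum_real i
  obtain ⟨k, hk⟩ := eigenvalue_mem_ball hμ
  rw [Metric.mem_closedBall, dist_comm, dist_eq_norm] at hk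
  have hrow : ∑ j ∈ univ.erase k, ‖A k j‖ = ∑ j, ‖A k j‖ - ‖A k k‖ :=
    sum_erase_eq_sub (mem_univ k)
  have hre : RCLike.re (A k k) - hA.eigenvalues i ≤ ‖A k k - hA.eigenvalues i‖ := by
    simpa using RCLike.re_le_norm (A k k - hA.eigenvalues i)
  linarith [hdom k, RCLike.re_le_norm (A k k)]

theorem Matrix.PosDef.dotProduct_mulVec_le_sq_of_posSemidef_fromBlocks {ι : Type*} [Fintype ι]
    [DecidableEq ι] {P : Matrix ι ι ℝ} (hP : P.PosDef) {α : ℝ} (hα : 0 < α) {y : ι → ℝ}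
    (h : (fromBlocks (α • P⁻¹) (replicateCol Unit y) (replicateRow Unit y)
      (of fun _ _ => α)).PosSemidef) :
    y ⬝ᵥ (P *ᵥ y) ≤ α ^ 2 := by
  have hA : (α • P⁻¹).PosDef := hP.inv.smul hα
  have : Invertible (α • P⁻¹) := hA.isUnit.invertible
  have hS := (hA.fromBlocks₁₁ (replicateCol Unit y) (of fun _ _ => α)).mp (by simpa using h)
  have hinv : (α • P⁻¹)⁻¹ = α⁻¹ • P := by
    refine inv_eq_left_inv ?_
    rw [smul_mul_smul_comm, inv_mul_cancel₀ hα.ne', mul_nonsing_inv _ hP.det_pos.ne'.isUnit,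
      one_smul]
  have h0 : α⁻¹ * (y ᵥ* P ⬝ᵥ y) ≤ α := by
    simpa [hinv, replicateCol, Matrix.mul_apply, dotProduct, vecMul, mul_sum]
      using hS.diag_nonneg (i := ())
  rw [← dotProduct_mulVec, inv_mul_le_iff₀ hα] at h0
  linarith

theorem stmt_9_general {n : ℕ} (P : Matrix (Fin n) (Fin n) ℝ) (hP : P.PosDef)
    (α : ℝ) (hα : 0 < α) (x c bbar : Fin n → ℝ)
    (h1 : ∀ j : Fin n, 2 * α * P⁻¹ j j ≥ bbar j + α * ∑ k : Fin n, |P⁻¹ j k|)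
    (h2 : α ≥ ∑ j : Fin n, bbar j)
    (h3 : ∀ j : Fin n, -bbar j ≤ x j - c j ∧ x j - c j ≤ bbar j) :
    (x - c) ⬝ᵥ (P *ᵥ (x - c)) ≤ α ^ 2 := by
  have hy : ∀ j, |x j - c j| ≤ bbar j := fun j => abs_le.mpr (h3 j)
  have hherm : (fromBlocks (α • P⁻¹) (replicateCol Unit (x - c)) (replicateRow Unit (x - c))
      (of fun _ _ => α)).IsHermitian :=
    (hP.inv.smul hα).isHermitian.fromBlocks (by simp) (by ext; simp)
  refine hP.dotProduct_mulVec_le_sq_of_posSemidef_fromBlocks hα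
    (hherm.posSemidef_of_sum_norm_le_two_mul_re_diag ?_)
  rintro (j | _)
  · simp only [Real.norm_eq_abs, Fintype.sum_sum_type, fromBlocks_apply₁₁, fromBlocks_apply₁₂,
      Matrix.smul_apply, smul_eq_mul, replicateCol_apply, Pi.sub_apply, abs_mul, abs_of_pos hα,
      ← mul_sum, univ_unique, sum_singleton, RCLike.re_to_real]
    linarith [h1 j, hy j]
  · simp only [Real.norm_eq_abs, Fintype.sum_sum_type, fromBlocks_apply₂₁, fromBlocks_apply₂₂,
      replicateRow_apply, Pi.sub_apply, of_apply, abs_of_pos hα, univ_unique, sum_singleton,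
      RCLike.re_to_real]
    linarith [sum_le_sum fun j (_ : j ∈ univ) => hy j]

/-- The conservative linear approximation (7) of the ellipsoidal terminal
constraint: diagonal dominance conditions on `P⁻¹` together with the
componentwise bound `|x − c| ≤ b̄` imply `(x−c)ᵀP(x−c) ≤ α²`. -/
theorem stmt_9 {n : ℕ} (P : Matrix (Fin n) (Fin n) ℝ) (hP : P.PosDef)
    (α : ℝ) (hα : 0 < α) (x c bbar : Fin n → ℝ)
    (hbbar : ∀ j, 0 ≤ bbar j)
    (h1 : ∀ j : Fin n, 2 * α * P⁻¹ j j ≥ bbar j + α * ∑ k : Fin n, |P⁻¹ j k|)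
    (h2 : α ≥ ∑ j : Fin n, bbar j)
    (h3 : ∀ j : Fin n, -bbar j ≤ x j - c j ∧ x j - c j ≤ bbar j) :
    (x - c) ⬝ᵥ (P *ᵥ (x - c)) ≤ α ^ 2 :=
  stmt_9_general P hP α hα x c bbar h1 h2 h3
end

section
/- Consider M subsystems with state dimensions n₁, …, n_M, neighbour sets 𝒩_i ⊆ {1,…,M} with i ∈ 𝒩_i, block matrices A_{ij} ∈ ℝ^{n_i×n_j} for j ∈ 𝒩_i, B_i ∈ ℝ^{n_i×m_i}, K_i ∈ ℝ^{m_i×n_i}, symmetric positive semidefinite P_i ∈ ℝ^{n_i×n_i}, symmetric Q_i ∈ ℝ^{n_i×n_i} and R_i ∈ ℝ^{m_i×m_i}, and scalars n_{ij} ≥ 0 with n_{ij} = 0 whenever j ∉ 𝒩_i and Σ_{i=1}^{M} n_{ij} ≤ 1 for every j. For a global state x = (x₁, …, x_M), define the closed-loop successor blocks x_i⁺ = Σ_{j∈𝒩_i} A_{ij} x_j + B_i K_i x_i. Suppose that for every subsystem i and every choice of the blocks (x_j)_{j∈𝒩_i}, Σ_{j∈𝒩_i} n_{ij} x_jᵀ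 P_j x_j − x_iᵀ (Q_i + K_iᵀ R_i K_i) x_i − (x_i⁺)ᵀ P_i x_i⁺ ≥ 0. Then for every global state x, Σ_{i=1}^{M} x_iᵀ P_i x_i − Σ_{i=1}^{M} (x_i⁺)ᵀ P_i x_i⁺ − Σ_{i=1}^{M} x_iᵀ (Q_i + K_iᵀ R_i K_i) x_i ≥ 0. -/
open Matrix

/-!
Summing the local inequalities over all subsystems, the weighted storage terms
`Σ_i Σ_{j ∈ 𝒩 i} ν i j V_j` regroup as `Σ_j (Σ_i ν i j) V_j`, which is at most `Σ_j V_j`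
because the column sums of `ν` are at most one and each `V_j = x_jᵀ P_j x_j` is nonnegative.
-/

section WeightedStorage

variable {ι α : Type*} [Fintype ι]

theorem sum_sum_weighted_le_sum [Semiring α] [PartialOrder α] [IsOrderedRing α]
    (N : ι → Finset ι) (ν : ι → ι → α) (V : ι → α) (hV : ∀ j, 0 ≤ V j)
    (hνN : ∀ i j, j ∉ N i → ν i j = 0) (hνsum : ∀ j, ∑ i, ν i j ≤ 1) :
    ∑ i, ∑ j ∈ N i, ν i j * V j ≤ ∑ j, V j := by
  have hsupport : ∀ i, ∑ j ∈ N i, ν i j * V j = ∑ j, ν i j * V j := fun i =>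
    Finset.sum_subset (Finset.subset_univ _) fun j _ hj => by rw [hνN i j hj, zero_mul]
  calc ∑ i, ∑ j ∈ N i, ν i j * V j = ∑ j, (∑ i, ν i j) * V j := by
        simp only [hsupport, Finset.sum_mul]
        exact Finset.sum_comm
    _ ≤ ∑ j, V j := Finset.sum_le_sum fun j _ => mul_le_of_le_one_left (hV j) (hνsum j)

theorem global_dissipation_of_local [Ring α] [PartialOrder α] [IsOrderedRing α]
    (N : ι → Finset ι) (ν : ι → ι → α) (V s l : ι → α) (hV : ∀ j, 0 ≤ V j)
    (hνN : ∀ i j, j ∉ N i → ν i j = 0) (hνsum : ∀ j, ∑ i, ν i j ≤ 1)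
    (hlocal : ∀ i, ∑ j ∈ N i, ν i j * V j - l i - s i ≥ 0) :
    ∑ i, V i - ∑ i, s i - ∑ i, l i ≥ 0 := by
  have hsum : 0 ≤ ∑ i, (∑ j ∈ N i, ν i j * V j - l i - s i) :=
    Finset.sum_nonneg fun i _ => hlocal i
  rw [Finset.sum_sub_distrib, Finset.sum_sub_distrib, sub_sub, sub_nonneg, add_comm] at hsum
  rw [ge_iff_le, sub_sub, sub_nonneg]
  exact hsum.trans (sum_sum_weighted_le_sum N ν V hV hνN hνsum)

end WeightedStorage

theorem stmt_10_general {M : ℕ} (n m : Fin M → ℕ)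
    (𝒩 : Fin M → Finset (Fin M))
    (A : ∀ i j : Fin M, Matrix (Fin (n i)) (Fin (n j)) ℝ)
    (B : ∀ i : Fin M, Matrix (Fin (n i)) (Fin (m i)) ℝ)
    (K : ∀ i : Fin M, Matrix (Fin (m i)) (Fin (n i)) ℝ)
    (P Q : ∀ i : Fin M, Matrix (Fin (n i)) (Fin (n i)) ℝ)
    (R : ∀ i : Fin M, Matrix (Fin (m i)) (Fin (m i)) ℝ)
    (hP : ∀ i, (P i).PosSemidef)
    (ν : Fin M → Fin M → ℝ)
    (hνN : ∀ i j, j ∉ 𝒩 i → ν i j = 0)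
    (hνsum : ∀ j, ∑ i : Fin M, ν i j ≤ 1)
    (hlocal : ∀ (i : Fin M) (x : ∀ j : Fin M, Fin (n j) → ℝ),
      ∑ j ∈ 𝒩 i, ν i j * (x j ⬝ᵥ (P j *ᵥ x j))
        - x i ⬝ᵥ ((Q i + (K i)ᵀ * R i * K i) *ᵥ x i)
        - ((∑ j ∈ 𝒩 i, A i j *ᵥ x j) + B i *ᵥ (K i *ᵥ x i)) ⬝ᵥ
            (P i *ᵥ ((∑ j ∈ 𝒩 i, A i j *ᵥ x j) + B i *ᵥ (K i *ᵥ x i))) ≥ 0) :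
    ∀ x : ∀ j : Fin M, Fin (n j) → ℝ,
      ∑ i : Fin M, x i ⬝ᵥ (P i *ᵥ x i)
        - ∑ i : Fin M,
            ((∑ j ∈ 𝒩 i, A i j *ᵥ x j) + B i *ᵥ (K i *ᵥ x i)) ⬝ᵥ
              (P i *ᵥ ((∑ j ∈ 𝒩 i, A i j *ᵥ x j) + B i *ᵥ (K i *ᵥ x i)))
        - ∑ i : Fin M, x i ⬝ᵥ ((Q i + (K i)ᵀ * R i * K i) *ᵥ x i) ≥ 0 := fun x =>
  global_dissipation_of_local 𝒩 ν (fun j => x j ⬝ᵥ (P j *ᵥ x j)) _ _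
    (fun j => (hP j).dotProduct_mulVec_nonneg (x j)) hνN hνsum (fun i => hlocal i x)

/-- Core of Theorem 2: the local quadratic-form inequalities (12), with
weighting scalars `ν i j` (supported on neighbours, with column sums at most 1),
imply the global Lyapunov inequality for the networked closed-loop dynamics
`x_i⁺ = Σ_{j∈𝒩_i} A_{ij} x_j + B_i K_i x_i`. -/
theorem stmt_10 {M : ℕ} (n m : Fin M → ℕ)
    (𝒩 : Fin M → Finset (Fin M)) (hself : ∀ i, i ∈ 𝒩 i)
    (A : ∀ i j : Fin M, Matrix (Fin (n i)) (Fin (n j)) ℝ)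
    (B : ∀ i : Fin M, Matrix (Fin (n i)) (Fin (m i)) ℝ)
    (K : ∀ i : Fin M, Matrix (Fin (m i)) (Fin (n i)) ℝ)
    (P Q : ∀ i : Fin M, Matrix (Fin (n i)) (Fin (n i)) ℝ)
    (R : ∀ i : Fin M, Matrix (Fin (m i)) (Fin (m i)) ℝ)
    (hP : ∀ i, (P i).PosSemidef)
    (hQ : ∀ i, (Q i).IsSymm) (hR : ∀ i, (R i).IsSymm)
    (ν : Fin M → Fin M → ℝ)
    (hν0 : ∀ i j, 0 ≤ ν i j)
    (hνN : ∀ i j, j ∉ 𝒩 i → ν i j = 0)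
    (hνsum : ∀ j, ∑ i : Fin M, ν i j ≤ 1)
    (hlocal : ∀ (i : Fin M) (x : ∀ j : Fin M, Fin (n j) → ℝ),
      ∑ j ∈ 𝒩 i, ν i j * (x j ⬝ᵥ (P j *ᵥ x j))
        - x i ⬝ᵥ ((Q i + (K i)ᵀ * R i * K i) *ᵥ x i)
        - ((∑ j ∈ 𝒩 i, A i j *ᵥ x j) + B i *ᵥ (K i *ᵥ x i)) ⬝ᵥ
            (P i *ᵥ ((∑ j ∈ 𝒩 i, A i j *ᵥ x j) + B i *ᵥ (K i *ᵥ x i))) ≥ 0) :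
    ∀ x : ∀ j : Fin M, Fin (n j) → ℝ,
      ∑ i : Fin M, x i ⬝ᵥ (P i *ᵥ x i)
        - ∑ i : Fin M,
            ((∑ j ∈ 𝒩 i, A i j *ᵥ x j) + B i *ᵥ (K i *ᵥ x i)) ⬝ᵥ
              (P i *ᵥ ((∑ j ∈ 𝒩 i, A i j *ᵥ x j) + B i *ᵥ (K i *ᵥ x i)))
        - ∑ i : Fin M, x i ⬝ᵥ ((Q i + (K i)ᵀ * R i * K i) *ᵥ x i) ≥ 0 :=
  stmt_10_general n m 𝒩 A B K P Q R hP ν hνN hνsum hlocal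
end

section
/- Consider M subsystems with state dimensions n₁, …, n_M, neighbour sets 𝒩_i ⊆ {1,…,M} with i ∈ 𝒩_i, block matrices A_{ij} ∈ ℝ^{n_i×n_j} for j ∈ 𝒩_i, B_i ∈ ℝ^{n_i×m_i}, K_i ∈ ℝ^{m_i×n_i}, symmetric positive definite P_i ∈ ℝ^{n_i×n_i}, Q_i ∈ ℝ^{n_i×n_i} and R_i ∈ ℝ^{m_i×m_i}, and scalars n_{ij} ≥ 0 with n_{ij} = 0 whenever j ∉ 𝒩_i and Σ_{i=1}^{M} n_{ij} ≤ 1 for every j. Suppose that for every subsystem i and every choice of blocks (x_j)_{j∈𝒩_i}, Σ_{j∈𝒩_i} n_{ij} x_jᵀ P_j x_j − x_iᵀ (Q_i + K_iᵀ R_i K_i) x_i − (Σ_{j∈𝒩_i} A_{ij} x_j + B_i K_i x_i)ᵀ P_i (Σ_{j∈𝒩_i} A_{ij} x_j + B_i K_i x_i) ≥ 0. Then every trajectory of the networked closed-loop system x_i(t+1) = Σ_{j∈𝒩_i} A_{ij} x_j(t) + B_i K_i x_i(t), i = 1, …, M, converges to the origin as t → ∞. -/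
/-!
Summing the local inequalities over the subsystems and using `∑ i, ν i j ≤ 1` gives the global
Lyapunov decrease `V (x⁺) ≤ V x - xᵀ (Q + Kᵀ R K) x` for `V x = ∑ i, x iᵀ P i x i`. Telescoping,
the dissipated quantity is summable, hence tends to zero, and positive definiteness of the blocks
`Q i + (K i)ᵀ R i K i` turns this into convergence of the trajectory.
-/

open Matrix Filter Topology

namespace Matrix

variable {n : Type*} [Fintype n] {Q : Matrix n n ℝ}

lemma PosSemidef.dotProduct_mulVec_nonneg_real (hQ : Q.PosSemidef) (y : n → ℝ) :
    0 ≤ y ⬝ᵥ (Q *ᵥ y) := by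
  simpa using hQ.dotProduct_mulVec_nonneg y

lemma PosDef.exists_pos_mul_norm_sq_le (hQ : Q.PosDef) :
    ∃ c > 0, ∀ y : n → ℝ, c * ‖y‖ ^ 2 ≤ y ⬝ᵥ (Q *ᵥ y) := by
  rcases subsingleton_or_nontrivial (n → ℝ) with _ | _
  · exact ⟨1, one_pos, fun y => by simp [Subsingleton.elim y 0]⟩
  -- `c` is the minimum of the form on the compact unit sphere; homogeneity does the rest.
  have hcont : Continuous fun y : n → ℝ => y ⬝ᵥ (Q *ᵥ y) := by fun_prop
  obtain ⟨y₀, hy₀, hmin⟩ := (isCompact_sphere (0 : n → ℝ) 1).exists_isMinOn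
    (NormedSpace.sphere_nonempty.2 zero_le_one) hcont.continuousOn
  have hy₀ne : y₀ ≠ 0 := ne_zero_of_mem_unit_sphere ⟨y₀, hy₀⟩
  refine ⟨_, by simpa using hQ.dotProduct_mulVec_pos hy₀ne, fun y => ?_⟩
  rcases eq_or_ne y 0 with rfl | hy
  · simp
  have hnorm : 0 < ‖y‖ := norm_pos_iff.2 hy
  have hunit : ‖y‖⁻¹ • y ∈ Metric.sphere (0 : n → ℝ) 1 := by
    simp [norm_smul, hnorm.ne']
  have hscale : (‖y‖⁻¹ • y) ⬝ᵥ (Q *ᵥ (‖y‖⁻¹ • y)) = (y ⬝ᵥ (Q *ᵥ y)) / ‖y‖ ^ 2 := by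
    simp only [mulVec_smul, smul_dotProduct, dotProduct_smul, smul_eq_mul]
    field_simp
  have hle : y₀ ⬝ᵥ (Q *ᵥ y₀) ≤ (‖y‖⁻¹ • y) ⬝ᵥ (Q *ᵥ (‖y‖⁻¹ • y)) := hmin hunit
  rwa [hscale, le_div_iff₀ (by positivity)] at hle

lemma PosDef.tendsto_zero_of_tendsto_dotProduct_mulVec {α : Type*} {l : Filter α}
    {y : α → n → ℝ} (hQ : Q.PosDef) (h : Tendsto (fun t => y t ⬝ᵥ (Q *ᵥ y t)) l (𝓝 0)) :
    Tendsto y l (𝓝 0) := by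
  obtain ⟨c, hc, hle⟩ := hQ.exists_pos_mul_norm_sq_le
  have hsq : Tendsto (fun t => ‖y t‖ ^ 2) l (𝓝 0) := by
    refine squeeze_zero (fun t => by positivity) (fun t => ?_) (by simpa using h.div_const c)
    rw [le_div_iff₀ hc, mul_comm]
    exact hle (y t)
  rw [tendsto_zero_iff_norm_tendsto_zero]
  simpa [Real.sqrt_sq (norm_nonneg _)] using hsq.sqrt

end Matrix

lemma tendsto_zero_of_lyapunov_decrease {V W : ℕ → ℝ} (hV : ∀ t, 0 ≤ V t) (hW : ∀ t, 0 ≤ W t)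
    (hdec : ∀ t, V (t + 1) ≤ V t - W t) : Tendsto W atTop (𝓝 0) := by
  have hpartial (T : ℕ) : ∑ t ∈ Finset.range T, W t ≤ V 0 := by
    calc ∑ t ∈ Finset.range T, W t ≤ ∑ t ∈ Finset.range T, (V t - V (t + 1)) :=
          Finset.sum_le_sum fun t _ => by linarith [hdec t]
      _ = V 0 - V T := Finset.sum_range_sub' V T
      _ ≤ V 0 := sub_le_self _ (hV T)
  exact (summable_of_sum_range_le hW hpartial).tendsto_atTop_zero

lemma sum_sum_mul_le_sum {ι R : Type*} [Fintype ι] [CommSemiring R] [PartialOrder R]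
    [IsOrderedRing R] {𝒩 : ι → Finset ι} {ν : ι → ι → R} {q : ι → R}
    (hνN : ∀ i j, j ∉ 𝒩 i → ν i j = 0) (hνsum : ∀ j, ∑ i, ν i j ≤ 1) (hq : ∀ j, 0 ≤ q j) :
    ∑ i, ∑ j ∈ 𝒩 i, ν i j * q j ≤ ∑ j, q j := by
  have hsupp (i : ι) : ∑ j ∈ 𝒩 i, ν i j * q j = ∑ j, ν i j * q j :=
    Finset.sum_subset (Finset.subset_univ _) fun j _ hj => by rw [hνN i j hj, zero_mul]
  simp only [hsupp]
  rw [Finset.sum_comm]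
  refine Finset.sum_le_sum fun j _ => ?_
  rw [← Finset.sum_mul]
  exact mul_le_of_le_one_left (hq j) (hνsum j)

section BlockQuadForm

variable {ι : Type*} [Fintype ι] {d : ι → Type*} [∀ i, Fintype (d i)]

def blockQuadForm (P : ∀ i, Matrix (d i) (d i) ℝ) (x : ∀ i, d i → ℝ) : ℝ :=
  ∑ i, x i ⬝ᵥ (P i *ᵥ x i)

lemma blockQuadForm_nonneg {P : ∀ i, Matrix (d i) (d i) ℝ} (hP : ∀ i, (P i).PosSemidef)
    (x : ∀ i, d i → ℝ) : 0 ≤ blockQuadForm P x :=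
  Finset.sum_nonneg fun i _ => (hP i).dotProduct_mulVec_nonneg_real _

lemma dotProduct_mulVec_le_blockQuadForm {P : ∀ i, Matrix (d i) (d i) ℝ}
    (hP : ∀ i, (P i).PosSemidef) (x : ∀ i, d i → ℝ) (i : ι) :
    x i ⬝ᵥ (P i *ᵥ x i) ≤ blockQuadForm P x :=
  Finset.single_le_sum (f := fun j => x j ⬝ᵥ (P j *ᵥ x j))
    (fun j _ => (hP j).dotProduct_mulVec_nonneg_real _) (Finset.mem_univ i)

lemma tendsto_zero_of_tendsto_blockQuadForm {α : Type*} {l : Filter α}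
    {P : ∀ i, Matrix (d i) (d i) ℝ} (hP : ∀ i, (P i).PosDef) {x : α → ∀ i, d i → ℝ}
    (h : Tendsto (fun t => blockQuadForm P (x t)) l (𝓝 0)) : Tendsto x l (𝓝 0) := by
  refine tendsto_pi_nhds.2 fun i => (hP i).tendsto_zero_of_tendsto_dotProduct_mulVec ?_
  exact squeeze_zero (fun t => (hP i).posSemidef.dotProduct_mulVec_nonneg_real _)
    (fun t => dotProduct_mulVec_le_blockQuadForm (fun j => (hP j).posSemidef) (x t) i) h

lemma blockQuadForm_le_sub_of_local {𝒩 : ι → Finset ι} {ν : ι → ι → ℝ}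
    {P S : ∀ i, Matrix (d i) (d i) ℝ} (hP : ∀ i, (P i).PosSemidef)
    (hνN : ∀ i j, j ∉ 𝒩 i → ν i j = 0) (hνsum : ∀ j, ∑ i, ν i j ≤ 1)
    {x y : ∀ i, d i → ℝ}
    (hlocal : ∀ i, ∑ j ∈ 𝒩 i, ν i j * (x j ⬝ᵥ (P j *ᵥ x j))
      - x i ⬝ᵥ (S i *ᵥ x i) - y i ⬝ᵥ (P i *ᵥ y i) ≥ 0) :
    blockQuadForm P y ≤ blockQuadForm P x - blockQuadForm S x := by
  have hsum := Finset.sum_nonneg fun i (_ : i ∈ Finset.univ) => hlocal i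
  simp only [Finset.sum_sub_distrib] at hsum
  have hweights := sum_sum_mul_le_sum hνN hνsum
    fun j => (hP j).dotProduct_mulVec_nonneg_real (x j)
  unfold blockQuadForm
  linarith

end BlockQuadForm

theorem stmt_12_general {M : ℕ} (n m : Fin M → ℕ)
    (𝒩 : Fin M → Finset (Fin M))
    (A : ∀ i j : Fin M, Matrix (Fin (n i)) (Fin (n j)) ℝ)
    (B : ∀ i : Fin M, Matrix (Fin (n i)) (Fin (m i)) ℝ)
    (K : ∀ i : Fin M, Matrix (Fin (m i)) (Fin (n i)) ℝ)
    (P Q : ∀ i : Fin M, Matrix (Fin (n i)) (Fin (n i)) ℝ)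
    (R : ∀ i : Fin M, Matrix (Fin (m i)) (Fin (m i)) ℝ)
    (hP : ∀ i, (P i).PosDef) (hQ : ∀ i, (Q i).PosDef)
    (hR : ∀ i, (R i).PosDef)
    (ν : Fin M → Fin M → ℝ)
    (hνN : ∀ i j, j ∉ 𝒩 i → ν i j = 0)
    (hνsum : ∀ j, ∑ i : Fin M, ν i j ≤ 1)
    (hlocal : ∀ (i : Fin M) (x : ∀ j : Fin M, Fin (n j) → ℝ),
      ∑ j ∈ 𝒩 i, ν i j * (x j ⬝ᵥ (P j *ᵥ x j))
        - x i ⬝ᵥ ((Q i + (K i)ᵀ * R i * K i) *ᵥ x i)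
        - ((∑ j ∈ 𝒩 i, A i j *ᵥ x j) + B i *ᵥ (K i *ᵥ x i)) ⬝ᵥ
            (P i *ᵥ ((∑ j ∈ 𝒩 i, A i j *ᵥ x j) + B i *ᵥ (K i *ᵥ x i))) ≥ 0)
    (x : ℕ → ∀ j : Fin M, Fin (n j) → ℝ)
    (hx : ∀ t i, x (t + 1) i = (∑ j ∈ 𝒩 i, A i j *ᵥ x t j)
        + B i *ᵥ (K i *ᵥ x t i)) :
    Filter.Tendsto x Filter.atTop (nhds 0) := by
  set S := fun i => Q i + (K i)ᵀ * R i * K i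
  have hS (i : Fin M) : (S i).PosDef :=
    (hQ i).add_posSemidef (by simpa using (hR i).posSemidef.conjTranspose_mul_mul_same (K i))
  have hP' (i : Fin M) : (P i).PosSemidef := (hP i).posSemidef
  have hdec (t : ℕ) :
      blockQuadForm P (x (t + 1)) ≤ blockQuadForm P (x t) - blockQuadForm S (x t) :=
    blockQuadForm_le_sub_of_local hP' hνN hνsum fun i => by
      simpa only [hx t i] using hlocal i (x t)
  refine tendsto_zero_of_tendsto_blockQuadForm hS ?_
  exact tendsto_zero_of_lyapunov_decrease (fun t => blockQuadForm_nonneg hP' _)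
    (fun t => blockQuadForm_nonneg (fun i => (hS i).posSemidef) _) hdec

/-- Theorem 2 combined with the Lyapunov convergence argument: the local
quadratic-form inequalities (12) with weighting scalars `ν i j` (supported on
neighbours, column sums at most 1) and positive definite blocks `P_i, Q_i, R_i`
force every trajectory of the networked closed loop
`x_i(t+1) = Σ_{j∈𝒩_i} A_{ij} x_j(t) + B_i K_i x_i(t)` to converge to 0. -/
theorem stmt_12 {M : ℕ} (n m : Fin M → ℕ)
    (𝒩 : Fin M → Finset (Fin M)) (hself : ∀ i, i ∈ 𝒩 i)
    (A : ∀ i j : Fin M, Matrix (Fin (n i)) (Fin (n j)) ℝ)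
    (B : ∀ i : Fin M, Matrix (Fin (n i)) (Fin (m i)) ℝ)
    (K : ∀ i : Fin M, Matrix (Fin (m i)) (Fin (n i)) ℝ)
    (P Q : ∀ i : Fin M, Matrix (Fin (n i)) (Fin (n i)) ℝ)
    (R : ∀ i : Fin M, Matrix (Fin (m i)) (Fin (m i)) ℝ)
    (hP : ∀ i, (P i).PosDef) (hQ : ∀ i, (Q i).PosDef)
    (hR : ∀ i, (R i).PosDef)
    (ν : Fin M → Fin M → ℝ)
    (hν0 : ∀ i j, 0 ≤ ν i j)
    (hνN : ∀ i j, j ∉ 𝒩 i → ν i j = 0)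
    (hνsum : ∀ j, ∑ i : Fin M, ν i j ≤ 1)
    (hlocal : ∀ (i : Fin M) (x : ∀ j : Fin M, Fin (n j) → ℝ),
      ∑ j ∈ 𝒩 i, ν i j * (x j ⬝ᵥ (P j *ᵥ x j))
        - x i ⬝ᵥ ((Q i + (K i)ᵀ * R i * K i) *ᵥ x i)
        - ((∑ j ∈ 𝒩 i, A i j *ᵥ x j) + B i *ᵥ (K i *ᵥ x i)) ⬝ᵥ
            (P i *ᵥ ((∑ j ∈ 𝒩 i, A i j *ᵥ x j) + B i *ᵥ (K i *ᵥ x i))) ≥ 0)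
    (x : ℕ → ∀ j : Fin M, Fin (n j) → ℝ)
    (hx : ∀ t i, x (t + 1) i = (∑ j ∈ 𝒩 i, A i j *ᵥ x t j)
        + B i *ᵥ (K i *ᵥ x t i)) :
    Filter.Tendsto x Filter.atTop (nhds 0) :=
  stmt_12_general n m 𝒩 A B K P Q R hP hQ hR ν hνN hνsum hlocal x hx
end
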